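/- arXiv:1702.08119 — 2 statements merged into one kernel-verified Lean document; each statement's English description precedes it below -/
import Mathlib

section
/- Let T be a simple broad poset and define, for tuples f̲, e̲ ∈ T⁺, f̲ ≤ e̲ iff one can write f̲ = f̲_1⋯f̲_k and e̲ = e_1⋯e_k with f̲_i ≤ e_i for all i. Then this relation ≤ on T⁺ is a partial order (in particular antisymmetric). -/
universe u

namespace BroadPaper

/-- A broad relation on `X`: a relation between finite unordered tuples
(multisets) over `X` and elements of `X`. -/
abbrev Rel (X : Type u) : Type u := Multiset X → X → Prop

variable {X : Type u} {Y : Type u} {A : Type u} {B : Type u} {Z : Type u}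

/-- Broad transitivity: if `f₁ ⋯ fₙ ≤ e` and `g̲ᵢ ≤ fᵢ` then `g̲₁ ⋯ g̲ₙ ≤ e`,
encoded via a multiset of pairs `(g̲ᵢ, fᵢ)`. -/
def BTrans (r : Rel X) : Prop :=
  ∀ (p : Multiset (Multiset X × X)) (e : X),
    r (p.map Prod.snd) e → (∀ q ∈ p, r q.1 q.2) → r ((p.map Prod.fst).sum) e

/-- A pre-broad poset: reflexivity plus broad transitivity. -/
def IsPreBroad (r : Rel X) : Prop := (∀ e : X, r {e} e) ∧ BTrans r

/-- A (commutative) broad poset: a pre-broad poset satisfying antisymmetry. -/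
def IsBroad (r : Rel X) : Prop :=
  IsPreBroad r ∧ ∀ e f : X, r {e} f → r {f} e → e = f

/-- Simplicity: letters in any broad relation are pairwise distinct. -/
def Simple (r : Rel X) : Prop := ∀ fs e, r fs e → fs.Nodup

/-- The descendant relation `f ≤_d e`. -/
def descends (r : Rel X) (f e : X) : Prop := ∃ fs, r fs e ∧ f ∈ fs

def Comparable (r : Rel X) (f g : X) : Prop := descends r f g ∨ descends r g f

def Incomp (r : Rel X) (f g : X) : Prop := ¬ descends r f g ∧ ¬ descends r g f

/-- Blockwise extension of a broad relation to a relation between tuples: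
`fs ≤ es` iff `fs = f̲₁ ⋯ f̲ₖ`, `es = e₁ ⋯ eₖ` with `f̲ᵢ ≤ eᵢ`. -/
def tupleLE (r : Rel X) (fs es : Multiset X) : Prop :=
  ∃ p : Multiset (Multiset X × X),
    p.map Prod.snd = es ∧ (p.map Prod.fst).sum = fs ∧ ∀ q ∈ p, r q.1 q.2

/-- A leaf: no tuple strictly below `e`. -/
def IsLeaf (r : Rel X) (e : X) : Prop := ¬ ∃ fs, r fs e ∧ fs ≠ ({e} : Multiset X)

/-- `fs` is the maximum tuple strictly below `e` (written `e^↑`).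
If `fs ≠ 0`, `e` is a node; if `fs = 0`, `e` is a stump. -/
def upTuple (r : Rel X) (e : X) (fs : Multiset X) : Prop :=
  (r fs e ∧ fs ≠ ({e} : Multiset X)) ∧
    ∀ gs, r gs e → gs ≠ ({e} : Multiset X) → tupleLE r gs fs

def IsStump (r : Rel X) (e : X) : Prop := upTuple r e 0

/-- A dendroidally ordered set (tree): a finite simple broad poset in which
every element is a leaf, node or stump, with a `≤_d`-maximum (root). -/
def IsTree (r : Rel X) : Prop :=
  IsBroad r ∧ Finite X ∧ Simple r ∧
    (∀ e : X, IsLeaf r e ∨ ∃ fs, upTuple r e fs) ∧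
    ∃ rt : X, ∀ e, descends r e rt

def IsMaxEl (r : Rel X) (e : X) : Prop := ∀ s, descends r e s → s = e

/-- A forestially ordered set (forest): each element has a unique
`≤_d`-maximal element above it. -/
def IsForest (r : Rel X) : Prop :=
  IsBroad r ∧ Finite X ∧ Simple r ∧
    (∀ e : X, IsLeaf r e ∨ ∃ fs, upTuple r e fs) ∧
    ∀ e : X, ∃! rt : X, IsMaxEl r rt ∧ descends r e rt

/-- A map of broad posets: preserves broad relations (letterwise on tuples). -/
def BroadHom (r : Rel X) (r' : Rel Y) (φ : X → Y) : Prop :=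
  ∀ fs e, r fs e → r' (fs.map φ) (φ e)

/-- `rs` is the root tuple: the tuple of `≤_d`-maximal elements (no repeats). -/
def IsRootTuple (r : Rel X) (rs : Multiset X) : Prop :=
  rs.Nodup ∧ ∀ x, x ∈ rs ↔ IsMaxEl r x

/-- Independent map of forests: `φ(r̲_F)·e̲ ≤ r̲_{F'}` for some tuple `e̲`. -/
def Independent (r : Rel X) (r' : Rel Y) (φ : X → Y) : Prop :=
  ∃ (rs : Multiset X) (rs' : Multiset Y) (es : Multiset Y),
    IsRootTuple r rs ∧ IsRootTuple r' rs' ∧ tupleLE r' (rs.map φ + es) rs'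

/-- The (pre-)broad relation generated by a set of generating relations:
closure under reflexivity and broad transitivity. -/
inductive GenRel (gen : Rel X) : Rel X
  | of : ∀ fs e, gen fs e → GenRel gen fs e
  | refl : ∀ e, GenRel gen {e} e
  | btrans : ∀ (p : Multiset (Multiset X × X)) (e : X),
      GenRel gen (p.map Prod.snd) e → (∀ q ∈ p, GenRel gen q.1 q.2) →
      GenRel gen ((p.map Prod.fst).sum) e

/-- Generators of the tensor product `S ⊗ T`: relations `s̲ × t ≤ (s,t)` and
`s × t̲ ≤ (s,t)`. -/
def tensorGen (rS : Rel A) (rT : Rel B) : Rel (A × B) := fun xs x =>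
  (∃ as, rS as x.1 ∧ xs = as.map fun a => (a, x.2)) ∨
  (∃ bs, rT bs x.2 ∧ xs = bs.map fun b => (x.1, b))

/-- The tensor product broad relation on `A × B`. -/
def tensorRel (rS : Rel A) (rT : Rel B) : Rel (A × B) := GenRel (tensorGen rS rT)

/-- Product of tuples: all pairs from `as` and `bs`. -/
def mprod (as : Multiset A) (bs : Multiset B) : Multiset (A × B) :=
  as.bind fun a => bs.map fun b => (a, b)

end BroadPaper

/-!
Only antisymmetry needs an argument. Take decompositions witnessing `f̲ ≤ e̲` and `e̲ ≤ f̲`, and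
call a block `(g̲, e)` trivial if `g̲ = e`. If all blocks are trivial, `f̲ = e̲`. Otherwise, since
the descendant relation `≤_d` of a simple broad poset is a partial order, pick `m` maximal among
the targets of the nontrivial blocks. Maximality and simplicity keep `m` out of the source of
every nontrivial block, so along either decomposition the multiplicity of `m` drops from the
target tuple to the source tuple by exactly the number of nontrivial blocks with target `m`.
Going around `f̲ ≤ e̲ ≤ f̲` it returns to its start, so there are no such blocks: a contradiction.
-/

namespace BroadPaper

open Multiset

theorem exists_add_of_map_eq_add {α β : Type*} {f : α → β} {s : Multiset α}
    {t₁ t₂ : Multiset β} (h : s.map f = t₁ + t₂) :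
    ∃ s₁ s₂, s = s₁ + s₂ ∧ s₁.map f = t₁ ∧ s₂.map f = t₂ := by
  induction t₁ using Multiset.induction generalizing s with
  | empty => exact ⟨0, s, by simp, by simp, by simpa using h⟩
  | cons b t₁ ih =>
    have hb : b ∈ s.map f := h ▸ mem_add.2 (.inl (mem_cons_self b t₁))
    obtain ⟨a, ha, rfl⟩ := mem_map.1 hb
    obtain ⟨s, rfl⟩ := exists_cons_of_mem ha
    rw [map_cons, cons_add, cons_inj_right] at h
    obtain ⟨s₁, s₂, rfl, rfl, rfl⟩ := ih h
    exact ⟨a ::ₘ s₁, s₂, by rw [cons_add], by rw [map_cons], rfl⟩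

section

variable {X : Type u} {r : Rel X}

theorem tupleLE_refl (hr : ∀ e, r {e} e) (fs : Multiset X) : tupleLE r fs fs :=
  ⟨fs.map fun e => ({e}, e), by simp,
    by simp [sum_map_singleton], by simpa using fun e _ => hr e⟩

theorem tupleLE_of_rel {fs : Multiset X} {e : X} (h : r fs e) : tupleLE r fs {e} :=
  ⟨{(fs, e)}, by simp, by simp, by simpa using h⟩

theorem tupleLE_add {fs₁ fs₂ es₁ es₂ : Multiset X} (h₁ : tupleLE r fs₁ es₁)
    (h₂ : tupleLE r fs₂ es₂) : tupleLE r (fs₁ + fs₂) (es₁ + es₂) := by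
  obtain ⟨p₁, rfl, rfl, hp₁⟩ := h₁
  obtain ⟨p₂, rfl, rfl, hp₂⟩ := h₂
  exact ⟨p₁ + p₂, map_add _ _ _, by rw [map_add, sum_add],
    fun q hq => (mem_add.1 hq).elim (hp₁ q) (hp₂ q)⟩

theorem exists_add_of_tupleLE_add {fs es₁ es₂ : Multiset X} (h : tupleLE r fs (es₁ + es₂)) :
    ∃ fs₁ fs₂, fs = fs₁ + fs₂ ∧ tupleLE r fs₁ es₁ ∧ tupleLE r fs₂ es₂ := by
  obtain ⟨p, hp_snd, rfl, hp⟩ := h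
  obtain ⟨p₁, p₂, rfl, rfl, rfl⟩ := exists_add_of_map_eq_add hp_snd
  exact ⟨_, _, by rw [map_add, sum_add], ⟨p₁, rfl, rfl, fun q hq => hp q (mem_add.2 (.inl hq))⟩,
    ⟨p₂, rfl, rfl, fun q hq => hp q (mem_add.2 (.inr hq))⟩⟩

theorem rel_of_tupleLE (hr : BTrans r) {fs gs : Multiset X} {e : X} (h : tupleLE r fs gs)
    (hgs : r gs e) : r fs e := by
  obtain ⟨p, rfl, rfl, hp⟩ := h
  exact hr p e hgs hp

theorem tupleLE_trans (hr : BTrans r) {fs gs es : Multiset X} (h₁ : tupleLE r fs gs)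
    (h₂ : tupleLE r gs es) : tupleLE r fs es := by
  obtain ⟨q, rfl, rfl, hq⟩ := h₂
  induction q using Multiset.induction generalizing fs with
  | empty => simpa using h₁
  | cons b q ih =>
    rw [map_cons, sum_cons] at h₁
    obtain ⟨fs₁, fs₂, rfl, h₁, h₂⟩ := exists_add_of_tupleLE_add h₁
    rw [map_cons, ← singleton_add]
    exact tupleLE_add (tupleLE_of_rel (rel_of_tupleLE hr h₁ (hq b (mem_cons_self b q))))
      (ih (fun x hx => hq x (mem_cons_of_mem hx)) h₂)

theorem rel_substitute [DecidableEq X] (h : IsPreBroad r) {as bs : Multiset X} {e g : X}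
    (has : r as e) (hg : g ∈ as) (hbs : r bs g) : r (bs + as.erase g) e := by
  refine rel_of_tupleLE h.2 ?_ has
  simpa [singleton_add, cons_erase hg] using
    tupleLE_add (tupleLE_of_rel hbs) (tupleLE_refl h.1 (as.erase g))

theorem descends_refl (hr : ∀ e, r {e} e) (e : X) : descends r e e :=
  ⟨{e}, hr e, mem_singleton_self e⟩

theorem descends_trans (h : IsPreBroad r) {f g e : X} (hfg : descends r f g)
    (hge : descends r g e) : descends r f e := by
  classical
  obtain ⟨bs, hbs, hf⟩ := hfg
  obtain ⟨as, has, hg⟩ := hge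
  exact ⟨bs + as.erase g, rel_substitute h has hg hbs, mem_add.2 (.inl hf)⟩

theorem eq_singleton_of_rel_of_mem (h : IsPreBroad r) (hs : Simple r) {gs : Multiset X} {e : X}
    (hgs : r gs e) (he : e ∈ gs) : gs = {e} := by
  classical
  have hnd : (gs + gs.erase e).Nodup := hs _ _ (rel_substitute h hgs he hgs)
  have : gs.erase e = 0 := (nodup_add.1 hnd).2.2.symm.eq_bot_of_le (erase_le e gs)
  rw [← cons_erase he, this]
  rfl

theorem eq_singleton_of_descends (h : IsPreBroad r) (hs : Simple r) {as : Multiset X} {e f : X}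
    (has : r as e) (hf : f ∈ as) (hef : descends r e f) : as = {f} := by
  classical
  obtain ⟨bs, hbs, he⟩ := hef
  have hsub : as + bs.erase e = {f} :=
    eq_singleton_of_rel_of_mem h hs (rel_substitute h hbs he has) (mem_add.2 (.inl hf))
  have : as ≤ {f} := hsub ▸ le_add_right as _
  exact (le_singleton.1 this).resolve_left (by rintro rfl; simp at hf)

theorem descends_antisymm (hb : IsBroad r) (hs : Simple r) {e f : X} (hfe : descends r f e)
    (hef : descends r e f) : f = e := by
  obtain ⟨as, has, hf⟩ := hfe
  obtain ⟨bs, hbs, he⟩ := hef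
  rw [eq_singleton_of_descends hb.1 hs has hf ⟨bs, hbs, he⟩] at has
  rw [eq_singleton_of_descends hb.1 hs hbs he ⟨_, has, mem_singleton_self f⟩] at hbs
  exact hb.2 f e has hbs

abbrev descendsPartialOrder (hb : IsBroad r) (hs : Simple r) : PartialOrder X where
  le := descends r
  le_refl := descends_refl hb.1.1
  le_trans _ _ _ := descends_trans hb.1
  le_antisymm _ _ := descends_antisymm hb hs

theorem sum_map_fst_eq_map_snd {p : Multiset (Multiset X × X)} (hp : ∀ x ∈ p, x.1 = {x.2}) :
    (p.map Prod.fst).sum = p.map Prod.snd := by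
  rw [map_congr rfl hp, ← sum_map_singleton (p.map Prod.snd), map_map]
  rfl

theorem count_map_snd_eq [DecidableEq X] (m : X) {p : Multiset (Multiset X × X)}
    (hm : ∀ x ∈ p, m ∈ x.1 → x.1 = {x.2}) :
    (p.map Prod.snd).count m =
      ((p.map Prod.fst).sum).count m + p.countP (fun x => x.1 ≠ {x.2} ∧ x.2 = m) := by
  induction p using Multiset.induction with
  | empty => simp
  | cons x p ih =>
    rw [map_cons, map_cons, sum_cons, count_cons, count_add, countP_cons,
      ih fun y hy => hm y (mem_cons_of_mem hy)]
    by_cases hx : x.1 = {x.2}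
    · simp only [hx, count_singleton, ne_eq, not_true_eq_false, false_and, if_false]
      split_ifs <;> omega
    · rw [count_eq_zero.2 fun h => hx (hm x (mem_cons_self x p) h)]
      simp only [hx, ne_eq, not_false_eq_true, true_and]
      by_cases h2 : x.2 = m
      · simp only [h2, if_true]
        omega
      · simp only [h2, Ne.symm h2, if_false]
        omega

theorem tupleLE_antisymm (hb : IsBroad r) (hs : Simple r) {fs es : Multiset X}
    (h₁ : tupleLE r fs es) (h₂ : tupleLE r es fs) : fs = es := by
  classical
  obtain ⟨p, rfl, rfl, hp⟩ := h₁
  obtain ⟨q, hq_snd, hq_fst, hq⟩ := h₂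
  have hpq : ∀ x ∈ p + q, r x.1 x.2 := fun x hx => (mem_add.1 hx).elim (hp x) (hq x)
  set T := ((p + q).filter fun x => x.1 ≠ {x.2}).map Prod.snd
  rcases T.empty_or_exists_mem with hT0 | ⟨t, ht⟩
  · refine sum_map_fst_eq_map_snd fun x hx => ?_
    by_contra hx1
    have : x.2 ∈ T := mem_map_of_mem _ (mem_filter.2 ⟨mem_add.2 (.inl hx), hx1⟩)
    simp [hT0] at this
  let _ := descendsPartialOrder hb hs
  obtain ⟨m, hm⟩ := T.toFinset.exists_maximal ⟨t, mem_toFinset.2 ht⟩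
  have hm_src : ∀ x ∈ p + q, m ∈ x.1 → x.1 = {x.2} := by
    intro x hx hmx
    by_contra hx1
    have hxT : x.2 ∈ T.toFinset := mem_toFinset.2 (mem_map_of_mem _ (mem_filter.2 ⟨hx, hx1⟩))
    have hxm : x.2 = m := hm.eq_of_ge hxT ⟨x.1, hpq x hx, hmx⟩
    exact hx1 (eq_singleton_of_rel_of_mem hb.1 hs (hpq x hx) (hxm ▸ hmx))
  have hcount_p := count_map_snd_eq m fun x hx => hm_src x (mem_add.2 (.inl hx))
  have hcount_q := count_map_snd_eq m fun x hx => hm_src x (mem_add.2 (.inr hx))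
  rw [hq_snd, hq_fst] at hcount_q
  have : 0 < (p + q).countP fun x => x.1 ≠ {x.2} ∧ x.2 = m := by
    obtain ⟨x, hx, rfl⟩ := mem_map.1 (mem_toFinset.1 hm.prop)
    exact countP_pos.2 ⟨x, (mem_filter.1 hx).1, (mem_filter.1 hx).2, rfl⟩
  rw [countP_add] at this
  omega

end

/-- For a simple broad poset, the blockwise extension of `≤`
to tuples is a partial order on `T⁺`. -/
theorem stmt2 {X : Type u} (r : Rel X) (hb : IsBroad r) (hs : Simple r) :
    IsPartialOrder (Multiset X) (tupleLE r) :=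
  { refl := tupleLE_refl hb.1.1
    trans := fun _ _ _ => tupleLE_trans hb.1.2
    antisymm := fun _ _ => tupleLE_antisymm hb hs }

end BroadPaper
end

section
/- Let φ: F → F' be an independent map of forests (i.e. there exists a tuple e̲ with φ(r̲_F)·e̲ ≤ r̲_{F'}, where r̲ denotes root tuples). Then two edges e, ē ∈ F are ≤_d-comparable if and only if φ(e), φ(ē) are ≤_d-comparable. Moreover, if φ(e) = φ(ē) then any relation ē·f̲ ≤ e forces f̲ = ε, and hence either e ≤ ē or ē ≤ e. -/
universe u

/-!
Two letters occurring at separate positions of one broad relation have no common descendant: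
substituting a tuple through each of them would repeat that descendant, against simplicity.
Incomparable edges `e, ē` of a forest either lie below distinct roots, or (by well-founded
induction on their common root, since every tuple below a node factors through its maximal
tuple) occur at separate positions of one relation. In the second case `φ` carries that relation
to one containing `φ e` and `φ ē` separately. In the first, independence puts the images of the
two roots either at separate positions of one relation of `F'` or below two distinct roots of
`F'`, and the latter also excludes a common descendant, every element having a unique root.
Either way `φ e` and `φ ē` cannot be comparable. The second part follows from simplicity of
`F'`: a relation `φ e · φ f̲ ≤ φ e` forces `φ f̲ = ε`.
-/

theorem Multiset.exists_cons_cons_of_mem_of_ne {α : Type*} {s : Multiset α} {a b : α}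
    (ha : a ∈ s) (hb : b ∈ s) (hab : a ≠ b) : ∃ t, s = a ::ₘ b ::ₘ t := by
  classical
  exact ⟨(s.erase a).erase b, by
    rw [Multiset.cons_erase ((Multiset.mem_erase_of_ne hab.symm).2 hb), Multiset.cons_erase ha]⟩

namespace BroadPaper

variable {X Y : Type u} {r : Rel X}

namespace IsPreBroad

theorem rel_add_of_rel_cons (hr : IsPreBroad r) {a t : X} {s g : Multiset X}
    (h : r (a ::ₘ s) t) (hg : r g a) : r (g + s) t := by
  have key := hr.2 ((g, a) ::ₘ s.map fun x => ({x}, x)) t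
  simp only [Multiset.map_cons, Multiset.map_map, Function.comp_def, Multiset.map_id',
    Multiset.sum_cons, Multiset.sum_map_singleton] at key
  refine key h fun q hq => ?_
  rcases Multiset.mem_cons.mp hq with rfl | hq
  · exact hg
  · obtain ⟨x, -, rfl⟩ := Multiset.mem_map.mp hq
    exact hr.1 x

theorem descends_refl (hr : IsPreBroad r) (e : X) : descends r e e :=
  ⟨{e}, hr.1 e, Multiset.mem_singleton_self e⟩

theorem descends_trans (hr : IsPreBroad r) {e f g : X} (hef : descends r e f)
    (hfg : descends r f g) : descends r e g := by
  obtain ⟨gs, hgs, he⟩ := hef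
  obtain ⟨fs, hfs, hf⟩ := hfg
  obtain ⟨fs, rfl⟩ := Multiset.exists_cons_of_mem hf
  exact ⟨gs + fs, hr.rel_add_of_rel_cons hfs hgs, Multiset.mem_add.mpr (Or.inl he)⟩

theorem rel_add_add_of_rel_cons_cons (hr : IsPreBroad r) {x y t : X} {s gx gy : Multiset X}
    (h : r (x ::ₘ y ::ₘ s) t) (hx : r gx x) (hy : r gy y) : r (gx + gy + s) t := by
  have hxs := hr.rel_add_of_rel_cons h hx
  rw [Multiset.add_cons] at hxs
  simpa only [add_left_comm gy gx s, add_assoc] using hr.rel_add_of_rel_cons hxs hy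

theorem not_descends_of_rel_cons_cons (hr : IsPreBroad r) (hS : Simple r) {x y t c : X}
    {s : Multiset X} (h : r (x ::ₘ y ::ₘ s) t) (hx : descends r c x) : ¬ descends r c y := by
  rintro ⟨gy, hgy, hcy⟩
  obtain ⟨gx, hgx, hcx⟩ := hx
  have hnodup := (Multiset.nodup_add.mp (hS _ _ (hr.rel_add_add_of_rel_cons_cons h hgx hgy))).1
  exact Multiset.disjoint_left.mp (Multiset.nodup_add.mp hnodup).2.2 hcx hcy

theorem eq_zero_of_rel_cons_self (hr : IsPreBroad r) (hS : Simple r) {a : X} {s : Multiset X}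
    (h : r (a ::ₘ s) a) : s = 0 := by
  rcases Multiset.empty_or_exists_mem s with rfl | ⟨x, hx⟩
  · rfl
  obtain ⟨s, rfl⟩ := Multiset.exists_cons_of_mem hx
  exact absurd (hr.descends_refl x) <| hr.not_descends_of_rel_cons_cons hS h
    ⟨_, h, Multiset.mem_cons_of_mem (Multiset.mem_cons_self x s)⟩

end IsPreBroad

theorem IsBroad.descends_antisymm (hr : IsBroad r) (hS : Simple r) {e a : X}
    (hea : descends r e a) (hae : descends r a e) : e = a := by
  obtain ⟨fs, hfs, he⟩ := hea
  obtain ⟨gs, hgs, ha⟩ := hae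
  obtain ⟨fs, rfl⟩ := Multiset.exists_cons_of_mem he
  obtain ⟨gs, rfl⟩ := Multiset.exists_cons_of_mem ha
  have hrel := hr.1.rel_add_of_rel_cons hfs hgs
  rw [Multiset.cons_add] at hrel
  obtain ⟨rfl, rfl⟩ := add_eq_zero.mp (hr.1.eq_zero_of_rel_cons_self hS hrel)
  exact hr.2 e a hfs hgs

theorem IsBroad.wellFounded_descends [Finite X] (hr : IsBroad r) (hS : Simple r) :
    WellFounded fun x y => descends r x y ∧ x ≠ y := by
  have : IsTrans X fun x y => descends r x y ∧ x ≠ y :=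
    ⟨fun a b c ⟨hab, hne⟩ ⟨hbc, _⟩ => ⟨hr.1.descends_trans hab hbc, fun hac =>
      hne (hr.descends_antisymm hS hab (hac ▸ hbc))⟩⟩
  have : Std.Irrefl fun x y => descends r x y ∧ x ≠ y := ⟨fun _ h => h.2 rfl⟩
  exact Finite.wellFounded_of_trans_of_irrefl _

theorem BroadHom.descends_map {r' : Rel Y} {φ : X → Y} (hφ : BroadHom r r' φ) {e a : X}
    (h : descends r e a) : descends r' (φ e) (φ a) := by
  obtain ⟨fs, hfs, he⟩ := h
  exact ⟨fs.map φ, hφ _ _ hfs, Multiset.mem_map_of_mem φ he⟩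

namespace tupleLE

theorem exists_descends {fs us : Multiset X} {e : X} (h : tupleLE r fs us) (he : e ∈ fs) :
    ∃ u ∈ us, descends r e u := by
  obtain ⟨p, rfl, rfl, hp⟩ := h
  obtain ⟨b, hb, heb⟩ := Multiset.mem_join.mp he
  obtain ⟨q, hq, rfl⟩ := Multiset.mem_map.mp hb
  exact ⟨q.2, Multiset.mem_map_of_mem _ hq, q.1, hp q hq, heb⟩

theorem rel_cons_cons_or {x y : X} {s us : Multiset X} (h : tupleLE r (x ::ₘ y ::ₘ s) us) :
    (∃ t s', r (x ::ₘ y ::ₘ s') t) ∨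
      ∃ u v us', us = u ::ₘ v ::ₘ us' ∧ descends r x u ∧ descends r y v := by
  obtain ⟨p, rfl, hsum, hp⟩ := h
  obtain ⟨b, hb, hxb⟩ := Multiset.mem_join.mp (hsum ▸ Multiset.mem_cons_self x _)
  obtain ⟨q, hq, rfl⟩ := Multiset.mem_map.mp hb
  obtain ⟨p, rfl⟩ := Multiset.exists_cons_of_mem hq
  obtain ⟨b, hqb⟩ := Multiset.exists_cons_of_mem hxb
  have hqr := hp q (Multiset.mem_cons_self q p)
  rw [Multiset.map_cons, Multiset.sum_cons, hqb, Multiset.cons_add,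
    Multiset.cons_inj_right] at hsum
  rcases Multiset.mem_add.mp (hsum ▸ Multiset.mem_cons_self y s) with hyb | hyp
  · obtain ⟨b, rfl⟩ := Multiset.exists_cons_of_mem hyb
    exact Or.inl ⟨q.2, b, hqb ▸ hqr⟩
  · obtain ⟨c, hc, hyc⟩ := Multiset.mem_join.mp hyp
    obtain ⟨q', hq', rfl⟩ := Multiset.mem_map.mp hc
    obtain ⟨p, rfl⟩ := Multiset.exists_cons_of_mem hq'
    refine Or.inr ⟨q.2, q'.2, p.map Prod.snd, by simp, ⟨_, hqr, hqb ▸ Multiset.mem_cons_self x b⟩,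
      q'.1, hp q' (Multiset.mem_cons_of_mem hq'), hyc⟩

end tupleLE

theorem exists_rel_cons_cons_of_incomp [Finite X] (hr : IsBroad r) (hS : Simple r)
    (hdich : ∀ e : X, IsLeaf r e ∨ ∃ fs, upTuple r e fs) {a e ē : X}
    (he : descends r e a) (hē : descends r ē a) (hinc : Incomp r e ē) :
    ∃ s, r (e ::ₘ ē ::ₘ s) a := by
  induction a using (hr.wellFounded_descends hS).induction with
  | _ a ih =>
    obtain ⟨fs, hfs, hefs⟩ := he
    obtain ⟨gs, hgs, hēgs⟩ := hē
    have hfa : fs ≠ {a} := by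
      rintro rfl
      obtain rfl := Multiset.mem_singleton.mp hefs
      exact hinc.2 ⟨gs, hgs, hēgs⟩
    have hga : gs ≠ {a} := by
      rintro rfl
      obtain rfl := Multiset.mem_singleton.mp hēgs
      exact hinc.1 ⟨fs, hfs, hefs⟩
    obtain ⟨us, ⟨hus, husa⟩, hmax⟩ := (hdich a).resolve_left fun hleaf => hleaf ⟨fs, hfs, hfa⟩
    obtain ⟨u, hu, be, hbe, hebe⟩ := (hmax fs hfs hfa).exists_descends hefs
    obtain ⟨v, hv, bē, hbē, hēbē⟩ := (hmax gs hgs hga).exists_descends hēgs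
    by_cases huv : u = v
    · subst huv
      obtain ⟨us, rfl⟩ := Multiset.exists_cons_of_mem hu
      have hua : u ≠ a := by
        rintro rfl
        exact husa (by rw [hr.1.eq_zero_of_rel_cons_self hS hus]; rfl)
      obtain ⟨s, hs⟩ := ih u ⟨⟨_, hus, hu⟩, hua⟩ ⟨be, hbe, hebe⟩ ⟨bē, hbē, hēbē⟩
      exact ⟨s + us, by simpa only [Multiset.cons_add] using hr.1.rel_add_of_rel_cons hus hs⟩
    · obtain ⟨us, rfl⟩ := Multiset.exists_cons_cons_of_mem_of_ne hu hv huv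
      obtain ⟨be, rfl⟩ := Multiset.exists_cons_of_mem hebe
      obtain ⟨bē, rfl⟩ := Multiset.exists_cons_of_mem hēbē
      have hs := hr.1.rel_add_add_of_rel_cons_cons hus hbe hbē
      simp only [Multiset.cons_add, Multiset.add_cons] at hs
      exact ⟨be + bē + us, Multiset.cons_swap e ē _ ▸ hs⟩

theorem Independent.not_descends_map_roots {r' : Rel Y} {φ : X → Y}
    (hind : Independent r r' φ) (hF' : IsForest r') {rt₁ rt₂ : X} (h₁ : IsMaxEl r rt₁)
    (h₂ : IsMaxEl r rt₂) (hne : rt₁ ≠ rt₂) {c : Y} (hc₁ : descends r' c (φ rt₁)) :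
    ¬ descends r' c (φ rt₂) := by
  intro hc₂
  obtain ⟨⟨hr', -⟩, -, hS', -, hroots'⟩ := hF'
  obtain ⟨rs, rs', es, ⟨-, hrs⟩, ⟨hrs'nd, hrs'⟩, hle⟩ := hind
  obtain ⟨rs, rfl⟩ := Multiset.exists_cons_cons_of_mem_of_ne ((hrs _).2 h₁) ((hrs _).2 h₂) hne
  rw [Multiset.map_cons, Multiset.map_cons, Multiset.cons_add, Multiset.cons_add] at hle
  rcases hle.rel_cons_cons_or with ⟨t, s, hts⟩ | ⟨u, v, us, rfl, hu, hv⟩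
  · exact hr'.not_descends_of_rel_cons_cons hS' hts hc₁ hc₂
  · have hu' := (hrs' u).1 (Multiset.mem_cons_self u _)
    have hv' := (hrs' v).1 (Multiset.mem_cons_of_mem (Multiset.mem_cons_self v us))
    obtain rfl : u = v :=
      (hroots' c).unique ⟨hu', hr'.descends_trans hc₁ hu⟩ ⟨hv', hr'.descends_trans hc₂ hv⟩
    exact (Multiset.nodup_cons.mp hrs'nd).1 (Multiset.mem_cons_self u us)

theorem Independent.not_descends_map_of_incomp {r' : Rel Y} {φ : X → Y}
    (hind : Independent r r' φ) (hF : IsForest r) (hF' : IsForest r') (hφ : BroadHom r r' φ)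
    {e ē : X} (hinc : Incomp r e ē) : ¬ descends r' (φ e) (φ ē) := by
  intro hd
  obtain ⟨hr, hfin, hS, hdich, hroots⟩ := hF
  have hr' : IsPreBroad r' := hF'.1.1
  obtain ⟨rt₁, ⟨hmax₁, he⟩, -⟩ := hroots e
  obtain ⟨rt₂, ⟨hmax₂, hē⟩, -⟩ := hroots ē
  by_cases hrt : rt₁ = rt₂
  · subst hrt
    obtain ⟨s, hs⟩ := exists_rel_cons_cons_of_incomp hr hS hdich he hē hinc
    have hφs := hφ _ _ hs
    rw [Multiset.map_cons, Multiset.map_cons] at hφs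
    exact hr'.not_descends_of_rel_cons_cons hF'.2.2.1 hφs (hr'.descends_refl _) hd
  · exact hind.not_descends_map_roots hF' hmax₁ hmax₂ hrt (hφ.descends_map he)
      (hr'.descends_trans hd (hφ.descends_map hē))

theorem Independent.comparable_map_iff {r' : Rel Y} {φ : X → Y} (hind : Independent r r' φ)
    (hF : IsForest r) (hF' : IsForest r') (hφ : BroadHom r r' φ) (e ē : X) :
    Comparable r e ē ↔ Comparable r' (φ e) (φ ē) := by
  refine ⟨Or.imp hφ.descends_map hφ.descends_map, fun h => by_contra fun hnc => ?_⟩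
  have hinc : Incomp r e ē := not_or.mp hnc
  rcases h with h | h
  · exact hind.not_descends_map_of_incomp hF hF' hφ hinc h
  · exact hind.not_descends_map_of_incomp hF hF' hφ ⟨hinc.2, hinc.1⟩ h

theorem BroadHom.eq_zero_of_rel_cons_of_map_eq {r' : Rel Y} {φ : X → Y} (hφ : BroadHom r r' φ)
    (hr' : IsPreBroad r') (hS' : Simple r') {a b : X} (hab : φ a = φ b) {fs : Multiset X}
    (h : r (b ::ₘ fs) a) : fs = 0 := by
  have hφh := hφ _ _ h
  rw [Multiset.map_cons, ← hab] at hφh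
  exact Multiset.map_eq_zero.mp (hr'.eq_zero_of_rel_cons_self hS' hφh)

/-- For an independent map of forests `φ : F → F'`, edges
`e, e'` are `≤_d`-comparable iff their images are; moreover if `φ e = φ e'`
then any relation `e'·f̲ ≤ e` forces `f̲ = ε`, and hence `e ≤ e'` or `e' ≤ e`. -/
theorem stmt9 {X Y : Type u} (r : Rel X) (r' : Rel Y) (φ : X → Y)
    (hF : IsForest r) (hF' : IsForest r')
    (hhom : BroadHom r r' φ) (hind : Independent r r' φ) :
    (∀ e e' : X, Comparable r e e' ↔ Comparable r' (φ e) (φ e')) ∧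
    (∀ e e' : X, φ e = φ e' →
      (∀ fs, r (e' ::ₘ fs) e → fs = 0) ∧ (r {e} e' ∨ r {e'} e)) := by
  have hr' : IsPreBroad r' := hF'.1.1
  have hiff := hind.comparable_map_iff hF hF' hhom
  have htail : ∀ e e' : X, φ e = φ e' → ∀ fs, r (e' ::ₘ fs) e → fs = 0 :=
    fun _ _ h _ => hhom.eq_zero_of_rel_cons_of_map_eq hr' hF'.2.2.1 h
  refine ⟨hiff, fun e e' he => ⟨htail e e' he, ?_⟩⟩
  rcases (hiff e e').2 (Or.inl (he ▸ hr'.descends_refl (φ e))) with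
    ⟨fs, hfs, hmem⟩ | ⟨fs, hfs, hmem⟩
  · obtain ⟨fs, rfl⟩ := Multiset.exists_cons_of_mem hmem
    obtain rfl := htail e' e he.symm fs hfs
    exact Or.inl hfs
  · obtain ⟨fs, rfl⟩ := Multiset.exists_cons_of_mem hmem
    obtain rfl := htail e e' he fs hfs
    exact Or.inr hfs

end BroadPaper
end
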